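/- arXiv:2512.07805 — 2 statements merged into one kernel-verified Lean document; each statement's English description precedes it below -/
import Mathlib

section
/- Let d ≥ 1, let a, b ∈ ℝ^d be linearly independent, set L = a bᵀ − b aᵀ and s = √(‖a‖²‖b‖² − ⟨a,b⟩²) > 0. Then the matrix exponential of L satisfies the Rodrigues-type closed form exp(L) = I + (sin s / s)·L + ((1 − cos s)/s²)·L². -/
open Matrix NormedSpace

private lemma vmv_mul_vmv {d : ℕ} (u v w x : Fin d → ℝ) :
    Matrix.vecMulVec u v * Matrix.vecMulVec w x = (v ⬝ᵥ w) • Matrix.vecMulVec u x := by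
  ext i j
  simp only [Matrix.mul_apply, Matrix.vecMulVec_apply, Matrix.smul_apply, smul_eq_mul,
    dotProduct, Finset.sum_mul]
  exact Finset.sum_congr rfl fun k _ => by ring

/-- For linearly independent `a, b ∈ ℝ^d`, `L = a bᵀ − b aᵀ` and
`s = √(‖a‖²‖b‖² − ⟨a,b⟩²) > 0`, the matrix exponential satisfies the
Rodrigues-type closed form `exp(L) = I + (sin s / s)·L + ((1 − cos s)/s²)·L²`. -/
theorem rank2_rodrigues_formula
    {d : ℕ} (hd : 1 ≤ d) (a b : EuclideanSpace ℝ (Fin d))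
    (hab : LinearIndependent ℝ ![a, b])
    (L : Matrix (Fin d) (Fin d) ℝ)
    (hL : L = Matrix.vecMulVec a b - Matrix.vecMulVec b a)
    (s : ℝ)
    (hs : s = Real.sqrt (‖a‖ ^ 2 * ‖b‖ ^ 2 - (inner ℝ a b : ℝ) ^ 2))
    (hs_pos : 0 < s) :
    exp L = 1 + (Real.sin s / s) • L + ((1 - Real.cos s) / s ^ 2) • (L * L) := by
  have hs_ne : s ≠ 0 := ne_of_gt hs_pos
  -- identify inner products with dot products
  have hinner : (inner ℝ a b : ℝ) = (a : Fin d → ℝ) ⬝ᵥ (b : Fin d → ℝ) := by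
    simp [dotProduct, PiLp.inner_apply, RCLike.inner_apply, conj_trivial, mul_comm]
  have hna : ‖a‖ ^ 2 = (a : Fin d → ℝ) ⬝ᵥ (a : Fin d → ℝ) := by
    rw [← real_inner_self_eq_norm_sq]
    simp only [dotProduct, PiLp.inner_apply, RCLike.inner_apply, conj_trivial, mul_comm]
  have hnb : ‖b‖ ^ 2 = (b : Fin d → ℝ) ⬝ᵥ (b : Fin d → ℝ) := by
    rw [← real_inner_self_eq_norm_sq]
    simp only [dotProduct, PiLp.inner_apply, RCLike.inner_apply, conj_trivial, mul_comm]
  have hnn : 0 ≤ ‖a‖ ^ 2 * ‖b‖ ^ 2 - (inner ℝ a b : ℝ) ^ 2 := by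
    have h1 := abs_real_inner_le_norm a b
    nlinarith [abs_nonneg (inner ℝ a b : ℝ), sq_abs (inner ℝ a b : ℝ), norm_nonneg a, norm_nonneg b]
  have hs2 : s ^ 2 = ‖a‖ ^ 2 * ‖b‖ ^ 2 - (inner ℝ a b : ℝ) ^ 2 := by
    rw [hs, Real.sq_sqrt hnn]
  -- key algebraic identity : L³ = −s² L
  have hL3 : L * (L * L) = (-(s ^ 2)) • L := by
    have hs2' : -(s ^ 2) = ((a : Fin d → ℝ) ⬝ᵥ b) ^ 2
        - ((a : Fin d → ℝ) ⬝ᵥ a) * ((b : Fin d → ℝ) ⬝ᵥ b) := by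
      rw [hs2, hinner, hna, hnb]; ring
    rw [hL, hs2']
    simp only [Matrix.mul_sub, Matrix.sub_mul, vmv_mul_vmv, Matrix.smul_mul, Matrix.mul_smul,
      smul_smul, smul_sub, sub_smul]
    rw [dotProduct_comm (b : Fin d → ℝ) (a : Fin d → ℝ)]
    module
  -- powers of L
  have hodd : ∀ n : ℕ, L ^ (2 * n + 1) = ((-(s ^ 2)) ^ n) • L := by
    intro n
    induction n with
    | zero => simp
    | succ n ih =>
      have h2 : 2 * (n + 1) + 1 = (2 * n + 1) + 2 := by ring
      rw [h2, pow_add, ih, smul_mul_assoc, pow_two L, hL3, smul_smul, ← pow_succ]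
  have heven : ∀ n : ℕ, L ^ (2 * n + 2) = ((-(s ^ 2)) ^ n) • (L * L) := by
    intro n
    have h2 : 2 * n + 2 = (2 * n + 1) + 1 := rfl
    rw [h2, pow_succ, hodd, smul_mul_assoc]
  -- the exponential series terms
  set f : ℕ → Matrix (Fin d) (Fin d) ℝ := fun n => ((Nat.factorial n : ℝ))⁻¹ • L ^ n with hf
  -- odd part
  have hoddsum : HasSum (fun k => f (2 * k + 1)) ((Real.sin s / s) • L) := by
    have h1 := ((Real.hasSum_sin s).div_const s).smul_const L
    convert h1 using 2 with k
    rw [hf]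
    simp only
    rw [hodd k, smul_smul]
    congr 1
    have hneg : (-(s ^ 2)) ^ k = (-1 : ℝ) ^ k * s ^ (2 * k) := by
      rw [← neg_one_mul, mul_pow, pow_mul]
    rw [hneg]
    have hfac : ((2 * k + 1).factorial : ℝ) ≠ 0 := Nat.cast_ne_zero.mpr (Nat.factorial_ne_zero _)
    field_simp
    ring
  -- even part
  have hcshift : HasSum (fun k : ℕ => (-1 : ℝ) ^ k * s ^ (2 * k) / ((2 * k + 2).factorial : ℝ))
      ((1 - Real.cos s) / s ^ 2) := by
    have h0 : HasSum (fun n : ℕ => (-1 : ℝ) ^ (n + 1) * s ^ (2 * (n + 1)) / ((2 * (n + 1)).factorial : ℝ))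
        (Real.cos s - 1) := by
      rw [hasSum_nat_add_iff (f := fun n : ℕ => (-1 : ℝ) ^ n * s ^ (2 * n) / ((2 * n).factorial : ℝ)) 1]
      simpa using Real.hasSum_cos s
    have h1 := (h0.neg).div_const (s ^ 2)
    rw [neg_sub] at h1
    convert h1 using 2 with k
    · rfl
    have h2 : 2 * (k + 1) = 2 * k + 2 := by ring
    rw [h2]
    have hfac : ((2 * k + 2).factorial : ℝ) ≠ 0 := Nat.cast_ne_zero.mpr (Nat.factorial_ne_zero _)
    field_simp
    ring
  have hevensum : HasSum (fun k => f (2 * k)) (1 + ((1 - Real.cos s) / s ^ 2) • (L * L)) := by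
    have h1 : HasSum (fun k : ℕ => f (2 * (k + 1))) (((1 - Real.cos s) / s ^ 2) • (L * L)) := by
      have h2 := hcshift.smul_const (L * L)
      convert h2 using 2 with k
      rw [hf]
      simp only
      have h3 : 2 * (k + 1) = 2 * k + 2 := by ring
      rw [h3, heven k, smul_smul]
      congr 1
      have hneg : (-(s ^ 2)) ^ k = (-1 : ℝ) ^ k * s ^ (2 * k) := by
        rw [← neg_one_mul, mul_pow, pow_mul]
      rw [hneg]
      ring
    have h4 := (hasSum_nat_add_iff (f := fun k => f (2 * k)) 1).mp h1
    simp only [Finset.range_one, Finset.sum_singleton, mul_zero] at h4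
    have hf0 : f 0 = 1 := by simp [hf]
    rw [hf0] at h4
    simpa [add_comm] using h4
  have hsum : HasSum f
      ((1 + ((1 - Real.cos s) / s ^ 2) • (L * L)) + (Real.sin s / s) • L) :=
    HasSum.even_add_odd hevensum hoddsum
  have ht : (∑' n : ℕ, ((Nat.factorial n : ℝ))⁻¹ • L ^ n)
      = 1 + ((1 - Real.cos s) / s ^ 2) • (L * L) + (Real.sin s / s) • L := hsum.tsum_eq
  simp only [exp_eq_tsum (𝕂 := ℝ)]
  rw [ht]
  abel
end

section
/- Let d ≥ 1, let a, b ∈ ℝ^d, set L = a bᵀ − b aᵀ and s = √(‖a‖²‖b‖² − ⟨a,b⟩²). Then for every n ∈ ℤ, every complex eigenvalue of exp(n·L) (i.e., every element of the spectrum of the complexification of exp(nL)) lies in the set {e^{i n s}, e^{−i n s}, 1}; in particular the spectral radius of exp(nL) equals 1. -/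
open Matrix NormedSpace

section AuxRank2

open Nat in
private lemma exp_smul_idem' {𝔸 : Type*} [NormedRing 𝔸] [NormedAlgebra ℂ 𝔸] [CompleteSpace 𝔸]
    (p : 𝔸) (hp : p * p = p) (c : ℂ) :
    exp (c • p) = 1 + (Complex.exp c - 1) • p := by
  have hpn : ∀ k : ℕ, p ^ (k + 1) = p := by
    intro k; induction k with
    | zero => simp
    | succ k ih => rw [pow_succ, ih, hp]
  have hterm : ∀ n : ℕ, ((n ! : ℂ)⁻¹) • (c • p) ^ n
      = (((n ! : ℂ)⁻¹ * c ^ n) • p + if n = 0 then (1 : 𝔸) - p else 0) := by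
    intro n
    cases n with
    | zero => simp
    | succ k =>
        rw [smul_pow, hpn k]
        simp [smul_smul]
  have hf : Summable fun n : ℕ => ((n ! : ℂ)⁻¹ * c ^ n) • p := by
    have := (NormedSpace.expSeries_summable' (𝕂 := ℂ) c)
    simpa [smul_smul] using this.smul_const p
  have hg : Summable fun n : ℕ => if n = 0 then (1 : 𝔸) - p else 0 := by
    apply summable_of_ne_finset_zero (s := {0})
    intro n hn
    simp [Finset.mem_singleton.not.mp hn]
  calc exp (c • p) = ∑' n : ℕ, ((n ! : ℂ)⁻¹) • (c • p) ^ n := by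
        rw [exp_eq_tsum ℂ]
    _ = ∑' n : ℕ, (((n ! : ℂ)⁻¹ * c ^ n) • p + if n = 0 then (1 : 𝔸) - p else 0) :=
        tsum_congr hterm
    _ = (∑' n : ℕ, ((n ! : ℂ)⁻¹ * c ^ n) • p) + ∑' n : ℕ, (if n = 0 then (1 : 𝔸) - p else 0) :=
        Summable.tsum_add hf hg
    _ = (∑' n : ℕ, ((n ! : ℂ)⁻¹ * c ^ n)) • p + ((1 : 𝔸) - p) := by
        rw [Summable.tsum_smul_const, tsum_ite_eq]
        simpa [smul_smul] using (NormedSpace.expSeries_summable' (𝕂 := ℂ) c)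
    _ = Complex.exp c • p + (1 - p) := by
        congr 1
        · congr 1
          rw [Complex.exp_eq_exp_ℂ, exp_eq_tsum ℂ]
          simp [smul_eq_mul]
    _ = 1 + (Complex.exp c - 1) • p := by
        rw [sub_smul, one_smul]; abel

private lemma vmv_mul' {d : ℕ} (x y z w : Fin d → ℝ) :
    vecMulVec x y * vecMulVec z w = (y ⬝ᵥ z) • vecMulVec x w := by
  ext i j
  simp [Matrix.mul_apply, vecMulVec_apply, dotProduct, Finset.sum_mul, Finset.mul_sum]
  congr 1; ext k; ring

private lemma L_cubed' {d : ℕ} (a b : EuclideanSpace ℝ (Fin d))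
    (L : Matrix (Fin d) (Fin d) ℝ)
    (hL : L = Matrix.vecMulVec a b - Matrix.vecMulVec b a) :
    L * L * L = -((‖a‖ ^ 2 * ‖b‖ ^ 2 - (inner ℝ a b : ℝ) ^ 2)) • L := by
  have hab : dotProduct (α := ℝ) (m := Fin d) a b = (inner ℝ a b : ℝ) := by
    simp [PiLp.inner_apply, dotProduct, mul_comm]
  have hba : dotProduct (α := ℝ) (m := Fin d) b a = (inner ℝ a b : ℝ) := by
    rw [← hab]; simp [dotProduct, mul_comm]
  have haa : dotProduct (α := ℝ) (m := Fin d) a a = ‖a‖ ^ 2 := by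
    rw [← real_inner_self_eq_norm_sq, PiLp.inner_apply]; simp [dotProduct, sq]
  have hbb : dotProduct (α := ℝ) (m := Fin d) b b = ‖b‖ ^ 2 := by
    rw [← real_inner_self_eq_norm_sq, PiLp.inner_apply]; simp [dotProduct, sq]
  subst hL
  simp only [sub_mul, mul_sub, vmv_mul', hab, hba, haa, hbb, smul_mul_assoc, mul_smul_comm,
    smul_smul]
  module

private lemma L_zero_of_dep {d : ℕ} (a b : EuclideanSpace ℝ (Fin d))
    (L : Matrix (Fin d) (Fin d) ℝ)
    (hL : L = Matrix.vecMulVec a b - Matrix.vecMulVec b a)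
    (hcs : (inner ℝ a b : ℝ) ^ 2 = ‖a‖ ^ 2 * ‖b‖ ^ 2) : L = 0 := by
  by_cases ha : a = 0
  · have h0 : ∀ i, a i = 0 := fun i => by rw [ha]; rfl
    ext i j
    simp [hL, vecMulVec_apply, h0]
  · have ha' : ‖a‖ ≠ 0 := norm_ne_zero_iff.mpr ha
    have hsq : ((inner ℝ a b : ℝ) - ‖a‖ * ‖b‖) * ((inner ℝ a b : ℝ) + ‖a‖ * ‖b‖) = 0 := by
      nlinarith [hcs]
    have hdep : ∃ r : ℝ, ‖a‖ • b = r • a := by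
      rcases mul_eq_zero.mp hsq with h | h
      · have := inner_eq_norm_mul_iff_real.mp (by linarith : (inner ℝ a b : ℝ) = ‖a‖ * ‖b‖)
        exact ⟨‖b‖, this.symm⟩
      · have h2 : (inner ℝ a (-b) : ℝ) = ‖a‖ * ‖-b‖ := by
          rw [inner_neg_right, norm_neg]; linarith
        have := inner_eq_norm_mul_iff_real.mp h2
        refine ⟨-‖b‖, ?_⟩
        have := this.symm
        rw [norm_neg] at this
        calc ‖a‖ • b = -(‖a‖ • (-b)) := by simp
          _ = -(‖b‖ • a) := by rw [this]
          _ = (-‖b‖) • a := by simp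
    obtain ⟨r, hr⟩ := hdep
    have hb : b = (‖a‖⁻¹ * r) • a := by
      rw [mul_smul, ← hr, inv_smul_smul₀ ha']
    have hbj : ∀ j, b j = (‖a‖⁻¹ * r) * a j := fun j => by rw [hb]; rfl
    ext i j
    simp only [hL, Matrix.sub_apply, vecMulVec_apply, Matrix.zero_apply, hbj]
    ring

private lemma key_annihilate {d : ℕ} (Aℂ : Matrix (Fin d) (Fin d) ℂ) (u : ℝ) (hu : u ≠ 0)
    (hA3 : Aℂ * Aℂ * Aℂ = (-(u:ℂ)^2) • Aℂ) :
    (exp Aℂ - algebraMap ℂ _ (Complex.exp (Complex.I * u))) *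
      (exp Aℂ - algebraMap ℂ _ (Complex.exp (-(Complex.I * u)))) *
      (exp Aℂ - 1) = 0 := by
  letI : NormedRing (Matrix (Fin d) (Fin d) ℂ) := Matrix.linftyOpNormedRing
  letI : NormedAlgebra ℂ (Matrix (Fin d) (Fin d) ℂ) := Matrix.linftyOpNormedAlgebra
  have hidem : ∀ (p : Matrix (Fin d) (Fin d) ℂ), p * p = p → ∀ c : ℂ,
      exp (c • p) = 1 + (Complex.exp c - 1) • p := fun p hp c => exp_smul_idem' p hp c
  have hnz : (u : ℂ) ≠ 0 := Complex.ofReal_ne_zero.mpr hu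
  have hne2 : (-((u:ℂ)^2)) ≠ 0 := by simpa using pow_ne_zero 2 hnz
  set c : ℂ := (-((u:ℂ)^2))⁻¹ with hc
  set P : Matrix (Fin d) (Fin d) ℂ := c • (Aℂ * Aℂ) with hP
  have hA2 : Aℂ * Aℂ = (-((u:ℂ)^2)) • P := by
    rw [hP, smul_smul, mul_inv_cancel₀ hne2, one_smul]
  have hPA : P * Aℂ = Aℂ := by
    rw [hP, smul_mul_assoc, hA3, smul_smul, hc, inv_mul_cancel₀ hne2, one_smul]
  have hAP : Aℂ * P = Aℂ := by
    rw [hP, mul_smul_comm, ← mul_assoc, hA3, smul_smul, hc, inv_mul_cancel₀ hne2, one_smul]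
  have hP2 : P * P = P := by
    have h4 : (Aℂ * Aℂ) * (Aℂ * Aℂ) = (-((u:ℂ)^2)) • (Aℂ * Aℂ) := by
      calc (Aℂ * Aℂ) * (Aℂ * Aℂ) = (Aℂ * Aℂ * Aℂ) * Aℂ := by rw [← mul_assoc]
        _ = (-((u:ℂ)^2)) • (Aℂ * Aℂ) := by rw [hA3, smul_mul_assoc]
    rw [hP, smul_mul_assoc, mul_smul_comm, h4, smul_smul, smul_smul]
    congr 1
    rw [hc]
    field_simp
  set B : Matrix (Fin d) (Fin d) ℂ := (Complex.I / (2*(u:ℂ))) • Aℂ with hB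
  have hBB : B * B = (4⁻¹ : ℂ) • P := by
    rw [hB, smul_mul_assoc, mul_smul_comm, hA2, smul_smul, smul_smul]
    congr 1
    field_simp
    ring_nf
    rw [Complex.I_sq]; ring
  have hPB : P * B = B := by rw [hB, mul_smul_comm, hPA]
  have hBP : B * P = B := by rw [hB, smul_mul_assoc, hAP]
  set πp : Matrix (Fin d) (Fin d) ℂ := (2⁻¹:ℂ) • P - B with hπp
  set πm : Matrix (Fin d) (Fin d) ℂ := (2⁻¹:ℂ) • P + B with hπm
  have hpp : πp * πp = πp := by
    rw [hπp]
    simp only [sub_mul, mul_sub, smul_mul_assoc, mul_smul_comm, hP2, hPB, hBP, hBB, smul_smul]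
    module
  have hmm : πm * πm = πm := by
    rw [hπm]
    simp only [add_mul, mul_add, smul_mul_assoc, mul_smul_comm, hP2, hPB, hBP, hBB, smul_smul]
    module
  have hpm : πp * πm = 0 := by
    rw [hπp, hπm]
    simp only [sub_mul, mul_add, smul_mul_assoc, mul_smul_comm, hP2, hPB, hBP, hBB, smul_smul]
    module
  have hmp : πm * πp = 0 := by
    rw [hπp, hπm]
    simp only [add_mul, mul_sub, smul_mul_assoc, mul_smul_comm, hP2, hPB, hBP, hBB, smul_smul]
    module
  have hsum : (Complex.I * (u:ℂ)) • πp + (-(Complex.I * (u:ℂ))) • πm = Aℂ := by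
    rw [hπp, hπm, hB]
    have hu2 : (u:ℂ) * (u:ℂ)⁻¹ = 1 := mul_inv_cancel₀ hnz
    match_scalars <;>
      first
      | ring1
      | linear_combination (-1:ℂ) * Complex.I_mul_I - Complex.I^2 * hu2
  set c₁ : ℂ := Complex.exp (Complex.I * u) with hc₁
  set c₂ : ℂ := Complex.exp (-(Complex.I * u)) with hc₂
  have hcomm : Commute ((Complex.I * (u:ℂ)) • πp) ((-(Complex.I * (u:ℂ))) • πm) := by
    have h : Commute πp πm := by unfold Commute SemiconjBy; rw [hpm, hmp]
    exact (h.smul_left _).smul_right _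
  have hE : exp Aℂ = 1 + (c₁ - 1) • πp + (c₂ - 1) • πm := by
    rw [← hsum, Matrix.exp_add_of_commute _ _ hcomm, hidem πp hpp, hidem πm hmm]
    rw [← hc₁, ← hc₂]
    simp only [add_mul, mul_add, one_mul, mul_one, smul_mul_assoc, mul_smul_comm, hpm, smul_smul]
    simp only [smul_zero, add_zero]
  have hEp : exp Aℂ * πp = c₁ • πp := by
    rw [hE]
    simp only [add_mul, one_mul, smul_mul_assoc, hpp, hmp, smul_zero, add_zero]
    match_scalars <;> ring
  have hEm : exp Aℂ * πm = c₂ • πm := by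
    rw [hE]
    simp only [add_mul, one_mul, smul_mul_assoc, hmm, hpm, smul_zero, add_zero]
    match_scalars <;> ring
  have hE1 : exp Aℂ - 1 = (c₁ - 1) • πp + (c₂ - 1) • πm := by rw [hE]; abel
  rw [Algebra.algebraMap_eq_smul_one, Algebra.algebraMap_eq_smul_one]
  have h1 : (exp Aℂ - c₂ • 1) * (exp Aℂ - 1) = ((c₁ - 1) * (c₁ - c₂)) • πp := by
    rw [hE1]
    simp only [sub_mul, mul_add, mul_smul_comm, smul_mul_assoc, hEp, hEm, one_mul, smul_smul]
    match_scalars <;> ring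
  have h2 : (exp Aℂ - c₁ • 1) * (((c₁ - 1) * (c₁ - c₂)) • πp) = 0 := by
    simp only [sub_mul, mul_smul_comm, smul_mul_assoc, hEp, one_mul, smul_smul]
    match_scalars <;> ring
  rw [mul_assoc, h1, h2]

end AuxRank2

/-- For `a, b ∈ ℝ^d`, `L = a bᵀ − b aᵀ` and
`s = √(‖a‖²‖b‖² − ⟨a,b⟩²)`, every complex eigenvalue of `exp(n·L)` (i.e. every
element of the spectrum of the complexification) lies in
`{e^{ins}, e^{−ins}, 1}`; in particular the spectral radius of `exp(nL)` is `1`. -/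
theorem rank2_exp_spectrum
    {d : ℕ} (hd : 1 ≤ d) (a b : EuclideanSpace ℝ (Fin d))
    (L : Matrix (Fin d) (Fin d) ℝ)
    (hL : L = Matrix.vecMulVec a b - Matrix.vecMulVec b a)
    (s : ℝ)
    (hs : s = Real.sqrt (‖a‖ ^ 2 * ‖b‖ ^ 2 - (inner ℝ a b : ℝ) ^ 2)) :
    ∀ n : ℤ,
      spectrum ℂ ((exp ((n : ℝ) • L)).map (algebraMap ℝ ℂ))
          ⊆ {Complex.exp (Complex.I * (n : ℂ) * (s : ℂ)),
              Complex.exp (-(Complex.I * (n : ℂ) * (s : ℂ))), 1}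
        ∧ spectralRadius ℂ ((exp ((n : ℝ) • L)).map (algebraMap ℝ ℂ)) = 1 := by
  intro n
  classical
  haveI : Nonempty (Fin d) := ⟨⟨0, hd⟩⟩
  letI : NormedRing (Matrix (Fin d) (Fin d) ℝ) := Matrix.linftyOpNormedRing
  letI : NormedAlgebra ℝ (Matrix (Fin d) (Fin d) ℝ) := Matrix.linftyOpNormedAlgebra
  letI : NormedRing (Matrix (Fin d) (Fin d) ℂ) := Matrix.linftyOpNormedRing
  letI : NormedAlgebra ℂ (Matrix (Fin d) (Fin d) ℂ) := Matrix.linftyOpNormedAlgebra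
  set A : Matrix (Fin d) (Fin d) ℝ := (n : ℝ) • L with hA
  set M : Matrix (Fin d) (Fin d) ℂ := (exp A).map (algebraMap ℝ ℂ) with hM
  set z : ℂ := Complex.I * (n : ℂ) * (s : ℂ) with hz
  -- cauchy-schwarz
  have hcs0 : 0 ≤ ‖a‖ ^ 2 * ‖b‖ ^ 2 - (inner ℝ a b : ℝ) ^ 2 := by
    nlinarith [real_inner_mul_inner_self_le a b, real_inner_self_eq_norm_sq a,
      real_inner_self_eq_norm_sq b]
  have hs2 : s ^ 2 = ‖a‖ ^ 2 * ‖b‖ ^ 2 - (inner ℝ a b : ℝ) ^ 2 := by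
    rw [hs, Real.sq_sqrt hcs0]
  -- spectrum is nonempty
  have hne : (spectrum ℂ M).Nonempty := by
    obtain ⟨μ, hμ⟩ := Module.End.exists_eigenvalue (Matrix.toLinAlgEquiv' M)
    exact ⟨μ, by
      rw [← AlgEquiv.spectrum_eq (Matrix.toLinAlgEquiv' : Matrix (Fin d) (Fin d) ℂ ≃ₐ[ℂ] _) M]
      exact Module.End.hasEigenvalue_iff_mem_spectrum.mp hμ⟩
  -- the three candidate eigenvalues have norm 1
  have hnn : ∀ w : ℂ, w.re = 0 → ‖Complex.exp w‖₊ = 1 := by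
    intro w hw
    have h : ‖Complex.exp w‖ = 1 := by
      rw [Complex.norm_exp, hw, Real.exp_zero]
    exact NNReal.coe_injective (by simpa using h)
  have hzre : z.re = 0 := by
    rw [hz]
    simp [Complex.mul_re, Complex.mul_im]
  have hnorm : ∀ w ∈ ({Complex.exp z, Complex.exp (-z), 1} : Set ℂ), ‖w‖₊ = 1 := by
    rintro w (rfl | rfl | rfl)
    · exact hnn z hzre
    · exact hnn (-z) (by simp [hzre])
    · exact nnnorm_one
  -- the subset claim
  have hsub : spectrum ℂ M ⊆ {Complex.exp z, Complex.exp (-z), 1} := by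
    by_cases hu : (n : ℝ) * s = 0
    · -- degenerate case : A = 0
      have hA0 : A = 0 := by
        rcases mul_eq_zero.mp hu with hn | hsz
        · rw [hA, hn, zero_smul]
        · have hcs : (inner ℝ a b : ℝ) ^ 2 = ‖a‖ ^ 2 * ‖b‖ ^ 2 := by
            have h0 : ‖a‖ ^ 2 * ‖b‖ ^ 2 - (inner ℝ a b : ℝ) ^ 2 = 0 := by
              have := hs2; rw [hsz] at this; linarith [this.symm]
            linarith
          rw [hA, L_zero_of_dep a b L hL hcs, smul_zero]
      have hM1 : M = 1 := by
        rw [hM, hA0, exp_zero, Matrix.map_one _ (map_zero _) (map_one _)]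
      rw [hM1, spectrum.one_eq]
      intro x hx
      rw [Set.mem_singleton_iff] at hx
      subst hx
      right; right; rfl
    · -- main case
      set u : ℝ := (n : ℝ) * s with hudef
      have hzu : z = Complex.I * (u : ℂ) := by rw [hz, hudef]; push_cast; ring
      have hL3 : L * L * L = (-(s ^ 2)) • L := by
        rw [L_cubed' a b L hL, hs2]
      have hA3ℝ : A * A * A = (-(u ^ 2)) • A := by
        rw [hA]
        simp only [smul_mul_assoc, mul_smul_comm, smul_smul, hL3, hudef]
        match_scalars
        ring
      have hA3ℂ : A.map (algebraMap ℝ ℂ) * A.map (algebraMap ℝ ℂ) * A.map (algebraMap ℝ ℂ)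
          = (-(u:ℂ)^2) • A.map (algebraMap ℝ ℂ) := by
        have hmapsmul : ∀ (r : ℝ) (X : Matrix (Fin d) (Fin d) ℝ),
            ((r • X).map (algebraMap ℝ ℂ)) = (r : ℂ) • X.map (algebraMap ℝ ℂ) := by
          intro r X; ext i j; simp
        rw [← Matrix.map_mul, ← Matrix.map_mul, hA3ℝ, hmapsmul]
        push_cast
        ring_nf
      have hM' : M = exp (A.map (algebraMap ℝ ℂ)) := by
        rw [hM]
        have h1 : (exp A).map (algebraMap ℝ ℂ) = exp (A.map (algebraMap ℝ ℂ)) := by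
          have := map_exp_of_mem_ball (𝕂 := ℝ) ((algebraMap ℝ ℂ).mapMatrix : Matrix (Fin d) (Fin d) ℝ →+* _)
            (Continuous.matrix_map continuous_id (continuous_algebraMap ℝ ℂ)) A
              ((expSeries_radius_eq_top ℝ (Matrix (Fin d) (Fin d) ℝ)).symm ▸ edist_lt_top _ _)
          exact this
        rw [h1]
      have hzero : (M - algebraMap ℂ _ (Complex.exp z)) *
          (M - algebraMap ℂ _ (Complex.exp (-z))) * (M - 1) = 0 := by
        rw [hM', hzu]
        exact key_annihilate (A.map (algebraMap ℝ ℂ)) u hu hA3ℂ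
      intro lam hlam
      classical
      open Polynomial in
      have hmem := spectrum.subset_polynomial_aeval M
        ((X - C (Complex.exp z)) * (X - C (Complex.exp (-z))) * (X - C 1))
        ⟨lam, hlam, rfl⟩
      rw [show (Polynomial.aeval M) ((X - C (Complex.exp z)) * (X - C (Complex.exp (-z)))
          * (X - C 1)) = (M - algebraMap ℂ _ (Complex.exp z)) *
          (M - algebraMap ℂ _ (Complex.exp (-z))) * (M - 1) by
        simp only [_root_.map_mul, map_sub, Polynomial.aeval_X, Polynomial.aeval_C, _root_.map_one]] at hmem
      rw [hzero, spectrum.zero_eq] at hmem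
      rw [Set.mem_singleton_iff] at hmem
      simp only [Polynomial.eval_mul, Polynomial.eval_sub, Polynomial.eval_X,
        Polynomial.eval_C, Polynomial.eval_one] at hmem
      rcases mul_eq_zero.mp hmem with h | h
      · rcases mul_eq_zero.mp h with h' | h'
        · left; exact sub_eq_zero.mp h'
        · right; left; exact sub_eq_zero.mp h'
      · right; right; exact sub_eq_zero.mp h
  refine ⟨hsub, ?_⟩
  -- spectral radius
  have hdef : spectralRadius ℂ M = ⨆ k ∈ spectrum ℂ M, (‖k‖₊ : ENNReal) := rfl
  rw [hdef]
  apply le_antisymm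
  · refine iSup₂_le fun k hk => ?_
    rw [hnorm k (hsub hk)]
    exact le_refl 1
  · obtain ⟨k, hk⟩ := hne
    have h1 : (1 : ENNReal) = (‖k‖₊ : ENNReal) := by rw [hnorm k (hsub hk)]; rfl
    rw [h1]
    exact le_iSup₂ (f := fun k (_ : k ∈ spectrum ℂ M) => (‖k‖₊ : ENNReal)) k hk
end
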